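/- Let A be a commutative ring of characteristic p and 𝔞 ⊆ A a nilpotent ideal with Ā = A/𝔞. Let b, b′ ∈ GL_r(A((z))) be such that there exist N ∈ ℕ, integers m, m′ and units u, u′ ∈ A⟦z⟧ˣ with z^N·b, z^N·b⁻¹, z^N·b′, z^N·(b′)⁻¹ ∈ M_r(A⟦z⟧), det b = z^m·u and det b′ = z^{m′}·u′ (i.e. both local shtukas are bounded). Let f ∈ GL_r(A((z))) satisfy f·b = b′·σ(f), and suppose the reduction f̄ ∈ GL_r(Ā((z))) satisfies det f̄ = z^{l}·w̄ for some l ∈ ℤ and some unit w̄ ∈ (Ā⟦z⟧)ˣ. Then det f = z^{l}·w for some unit w ∈ A⟦z⟧ˣ, and there is M ∈ ℕ with z^M·f ∈ M_r(A⟦z⟧); that is, a quasi-isogeny between bounded local shtukas whose reduction modulo 𝔞 is bounded by (μ, z) for some μ is itself bounded by (μ̃, z) for some μ̃. -/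

import Mathlib

noncomputable section

open scoped Classical

namespace HVpaper

variable {A : Type*} [CommRing A]

/-- Coefficientwise `q`-th power map on formal Laurent series (the map `σ` for `q ≠ 0`;
junk value `0` for `q = 0`). -/
def laurentFrob (q : ℕ) (x : LaurentSeries A) : LaurentSeries A :=
  if hq : q = 0 then 0 else x.map (ZeroHom.mk (fun a : A => a ^ q) (zero_pow hq))

/-- Entrywise `σ` on matrices of Laurent series. -/
def matFrob (q : ℕ) {n : Type*} (M : Matrix n n (LaurentSeries A)) :
    Matrix n n (LaurentSeries A) :=
  M.map (laurentFrob q)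

/-- `x` lies in `z^n · A⟦z⟧`, i.e. all coefficients below `n` vanish. -/
def InZPow (n : ℤ) (x : LaurentSeries A) : Prop :=
  ∀ m : ℤ, m < n → x.coeff m = 0

/-- `x` lies in the subring `A⟦z⟧` of `A((z))`. -/
def InPS (x : LaurentSeries A) : Prop :=
  ∀ m : ℤ, m < 0 → x.coeff m = 0

/-- `u` is a unit of the subring `A⟦z⟧` of `A((z))`. -/
def IsPSUnit (u : LaurentSeries A) : Prop :=
  InPS u ∧ ∃ v : LaurentSeries A, InPS v ∧ u * v = 1

/-- The element `z^n` of `A((z))`. -/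
def zPow (n : ℤ) : LaurentSeries A :=
  HahnSeries.single n 1

/-- The coefficientwise map on Laurent series induced by a ring homomorphism. -/
def lmap {B : Type*} [CommRing B] (f : A →+* B) (x : LaurentSeries A) : LaurentSeries B :=
  x.map f

variable {k : Type*} [Field k]

/-- Membership in the subgroup `I_n` of `GL_r(k⟦z⟧)`:  `g` and its inverse have entries in
`k⟦z⟧`, `g ≡ 1 mod z^n` on the diagonal, the entries above the diagonal lie in `z^n k⟦z⟧` and
those below the diagonal lie in `z^(n+1) k⟦z⟧`.  For `n = 0` this is the standard Iwahori
subgroup. -/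
def InIwahori {r : ℕ} (n : ℕ) (g : Matrix (Fin r) (Fin r) (LaurentSeries k)) : Prop :=
  (∀ i j, InPS (g i j)) ∧ IsUnit g ∧ (∀ i j, InPS (g⁻¹ i j)) ∧
  (∀ i : Fin r, InZPow (n : ℤ) (g i i - 1)) ∧
  (∀ i j : Fin r, i < j → InZPow (n : ℤ) (g i j)) ∧
  (∀ i j : Fin r, j < i → InZPow ((n : ℤ) + 1) (g i j))

/-- The sum of the `i` smallest (i.e. last `i`) entries of the nonincreasing tuple `μ`. -/
def lowSum {r : ℕ} (μ : Fin r → ℤ) (i : ℕ) : ℤ :=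
  ∑ j : Fin r, if r ≤ (j : ℕ) + i then μ j else 0

/-- The matrix `M` over `A((z))` is bounded by the dominant cocharacter
`μ = (μ 0 ≥ … ≥ μ (r-1))` of `GL_r`: for each `1 ≤ i ≤ r` every `i×i` minor of `M` lies in
`z^(μ_{r-i+1}+⋯+μ_r)·A⟦z⟧` and `det M = z^(μ_1+⋯+μ_r)` times a unit of `A⟦z⟧`. -/
def BoundedBy {r : ℕ} (μ : Fin r → ℤ) (M : Matrix (Fin r) (Fin r) (LaurentSeries A)) : Prop :=
  (∀ i : Fin r, ∀ ri ci : Fin ((i : ℕ) + 1) → Fin r,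
    InZPow (lowSum μ ((i : ℕ) + 1)) ((M.submatrix ri ci).det)) ∧
  (∃ u : LaurentSeries A, IsPSUnit u ∧ M.det = zPow (∑ j, μ j) * u)

/-!
Taking determinants in `f * b = b' * σ(f)` gives `det f · det b = det b' · σ(det f)`. Write
`det f = z^l · w`. Modulo `𝔞`, `w` is a unit of `Ā⟦z⟧`; comparing `z`-adic valuations there forces
the exponents of `z` in `det b` and `det b'` to agree, so `w = v · σ(w)` with `v ∈ A⟦z⟧`. As `σ`
raises coefficients to the `q`-th power, the coefficients of `w` in negative degree, which lie
in `𝔞`, lie in every power of `𝔞`, hence vanish. Finally a power series whose reduction modulo a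
nilpotent ideal is a unit is itself a unit. The bound on the entries of `f` holds for any matrix
of Laurent series, whose supports are bounded below.
-/

section

variable {B : Type*} [CommRing B]

lemma InZPow.mono {n n' : ℤ} {x : LaurentSeries A} (h : n' ≤ n) (hx : InZPow n x) :
    InZPow n' x :=
  fun m hm => hx m (hm.trans_le h)

lemma exists_inZPow_neg (x : LaurentSeries A) : ∃ N : ℕ, InZPow (-(N : ℤ)) x :=
  ⟨(-x.order).toNat, fun _ hm => HahnSeries.coeff_eq_zero_of_lt_order (by omega)⟩

lemma exists_inZPow_neg_entries {ι κ : Type*} [Fintype ι] [Fintype κ]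
    (M : Matrix ι κ (LaurentSeries A)) : ∃ N : ℕ, ∀ i j, InZPow (-(N : ℤ)) (M i j) := by
  choose N hN using fun ij : ι × κ => exists_inZPow_neg (M ij.1 ij.2)
  exact ⟨Finset.univ.sup N, fun i j => (hN (i, j)).mono
    (neg_le_neg (Nat.cast_le.mpr (Finset.le_sup (Finset.mem_univ _))))⟩

lemma zPow_mul_zPow (a b : ℤ) : (zPow a * zPow b : LaurentSeries A) = zPow (a + b) := by
  simp [zPow, HahnSeries.single_mul_single]

lemma zPow_zero : (zPow 0 : LaurentSeries A) = 1 := HahnSeries.single_zero_one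

lemma isUnit_zPow (n : ℤ) : IsUnit (zPow n : LaurentSeries A) :=
  IsUnit.of_mul_eq_one (zPow (-n)) (by rw [zPow_mul_zPow, add_neg_cancel, zPow_zero])

lemma coeff_zPow_mul (n m : ℤ) (x : LaurentSeries A) :
    (zPow n * x).coeff m = x.coeff (m - n) := by
  simp [zPow, HahnSeries.coeff_single_mul]

lemma coeff_lmap (g : A →+* B) (x : LaurentSeries A) (m : ℤ) :
    (lmap g x).coeff m = g (x.coeff m) := rfl

def lmapRingHom (g : A →+* B) : LaurentSeries A →+* LaurentSeries B where
  toFun := lmap g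
  map_one' := by ext m; simp [coeff_lmap, HahnSeries.coeff_one, apply_ite g]
  map_mul' x y := HahnSeries.map_mul g.toNonUnitalRingHom
  map_zero' := by ext m; simp [coeff_lmap]
  map_add' x y := by ext m; simp [coeff_lmap]

lemma lmapRingHom_apply (g : A →+* B) (x : LaurentSeries A) : lmapRingHom g x = lmap g x := rfl

lemma lmap_zPow (g : A →+* B) (n : ℤ) : lmap g (zPow n) = zPow n := by
  ext m
  simp [coeff_lmap, zPow, HahnSeries.coeff_single, apply_ite g]

lemma lmap_zPow_mul (g : A →+* B) (n : ℤ) (x : LaurentSeries A) :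
    lmap g (zPow n * x) = zPow n * lmap g x := by
  rw [← lmapRingHom_apply, map_mul, lmapRingHom_apply, lmapRingHom_apply, lmap_zPow]

lemma lmap_det {n : Type*} [Fintype n] [DecidableEq n] (g : A →+* B)
    (M : Matrix n n (LaurentSeries A)) : lmap g M.det = (M.map (lmap g)).det :=
  RingHom.map_det (lmapRingHom g) M

lemma coeff_laurentFrob {q : ℕ} (hq : q ≠ 0) (x : LaurentSeries A) (m : ℤ) :
    (laurentFrob q x).coeff m = x.coeff m ^ q := by
  simp [laurentFrob, hq]

lemma laurentFrob_zPow_mul {q : ℕ} (hq : q ≠ 0) (n : ℤ) (x : LaurentSeries A) :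
    laurentFrob q (zPow n * x) = zPow n * laurentFrob q x := by
  ext m
  simp only [coeff_laurentFrob hq, coeff_zPow_mul]

lemma lmap_laurentFrob {q : ℕ} (hq : q ≠ 0) (g : A →+* B) (x : LaurentSeries A) :
    lmap g (laurentFrob q x) = laurentFrob q (lmap g x) := by
  ext m
  simp only [coeff_lmap, coeff_laurentFrob hq, map_pow]

lemma laurentFrob_eq_lmap_iterateFrobenius {p : ℕ} [Fact p.Prime] [CharP A p] (e : ℕ)
    (x : LaurentSeries A) : laurentFrob (p ^ e) x = lmap (iterateFrobenius A p e) x := by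
  ext m
  rw [coeff_laurentFrob (pow_ne_zero e (Fact.out : p.Prime).ne_zero), coeff_lmap,
    iterateFrobenius_def]

lemma det_matFrob {p : ℕ} (hp : p.Prime) [CharP A p] (e : ℕ) {n : Type*} [Fintype n]
    [DecidableEq n] (M : Matrix n n (LaurentSeries A)) :
    (matFrob (p ^ e) M).det = laurentFrob (p ^ e) M.det := by
  have := Fact.mk hp
  have hM : matFrob (p ^ e) M = (lmapRingHom (iterateFrobenius A p e)).mapMatrix M :=
    Matrix.ext fun i j => laurentFrob_eq_lmap_iterateFrobenius e (M i j)
  rw [hM, ← RingHom.map_det, lmapRingHom_apply, laurentFrob_eq_lmap_iterateFrobenius]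

lemma inPS_iff_exists_coe {x : LaurentSeries A} :
    InPS x ↔ ∃ P : PowerSeries A, (P : LaurentSeries A) = x := by
  constructor
  · intro hx
    refine ⟨PowerSeries.mk fun n => x.coeff n, ?_⟩
    ext m
    rw [PowerSeries.coeff_coe]
    split_ifs with hm
    · exact (hx m hm).symm
    · rw [PowerSeries.coeff_mk, Int.natAbs_of_nonneg (not_lt.mp hm)]
  · rintro ⟨P, rfl⟩ m hm
    rw [PowerSeries.coeff_coe, if_pos hm]

lemma InPS.mul {x y : LaurentSeries A} (hx : InPS x) (hy : InPS y) : InPS (x * y) := by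
  obtain ⟨P, rfl⟩ := inPS_iff_exists_coe.mp hx
  obtain ⟨P', rfl⟩ := inPS_iff_exists_coe.mp hy
  exact inPS_iff_exists_coe.mpr ⟨P * P', map_mul _ _ _⟩

lemma isPSUnit_iff {u : LaurentSeries A} : IsPSUnit u ↔ InPS u ∧ IsUnit (u.coeff 0) := by
  have coeff_zero_coe : ∀ P : PowerSeries A,
      (P : LaurentSeries A).coeff 0 = PowerSeries.constantCoeff P := fun P => by
    simpa using LaurentSeries.coeff_coe_powerSeries P 0
  constructor
  · rintro ⟨hu, v, hv, huv⟩
    obtain ⟨P, rfl⟩ := inPS_iff_exists_coe.mp hu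
    obtain ⟨P', rfl⟩ := inPS_iff_exists_coe.mp hv
    have hPP' : P * P' = 1 :=
      HahnSeries.ofPowerSeries_injective (Γ := ℤ) (by rw [map_mul, map_one]; exact huv)
    rw [coeff_zero_coe, ← PowerSeries.isUnit_iff_constantCoeff]
    exact ⟨hu, IsUnit.of_mul_eq_one _ hPP'⟩
  · rintro ⟨hu, hu0⟩
    obtain ⟨P, rfl⟩ := inPS_iff_exists_coe.mp hu
    rw [coeff_zero_coe, ← PowerSeries.isUnit_iff_constantCoeff] at hu0
    obtain ⟨P', hPP'⟩ := hu0.exists_right_inv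
    exact ⟨hu, P', inPS_iff_exists_coe.mpr ⟨P', rfl⟩, by rw [← map_mul, hPP', map_one]⟩

lemma IsPSUnit.mul {u v : LaurentSeries A} (hu : IsPSUnit u) (hv : IsPSUnit v) :
    IsPSUnit (u * v) := by
  obtain ⟨hu, u', hu', huu'⟩ := hu
  obtain ⟨hv, v', hv', hvv'⟩ := hv
  exact ⟨hu.mul hv, u' * v', hu'.mul hv', by linear_combination v * v' * huu' + hvv'⟩

lemma IsPSUnit.lmap (g : A →+* B) {u : LaurentSeries A} (hu : IsPSUnit u) :
    IsPSUnit (HVpaper.lmap g u) := by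
  obtain ⟨hu, hu0⟩ := isPSUnit_iff.mp hu
  exact isPSUnit_iff.mpr ⟨fun m hm => by rw [coeff_lmap, hu m hm, map_zero], hu0.map g⟩

lemma IsPSUnit.laurentFrob {q : ℕ} (hq : q ≠ 0) {u : LaurentSeries A} (hu : IsPSUnit u) :
    IsPSUnit (HVpaper.laurentFrob q u) := by
  obtain ⟨hu, hu0⟩ := isPSUnit_iff.mp hu
  refine isPSUnit_iff.mpr ⟨fun m hm => ?_, ?_⟩ <;> rw [coeff_laurentFrob hq]
  · rw [hu m hm, zero_pow hq]
  · exact hu0.pow q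

lemma IsPSUnit.of_lmap_quotient_mk {I : Ideal A} (hI : IsNilpotent I) {w : LaurentSeries A}
    (hw : InPS w) (h : IsPSUnit (HVpaper.lmap (Ideal.Quotient.mk I) w)) : IsPSUnit w :=
  isPSUnit_iff.mpr ⟨hw, hI.isUnit_quotient_mk_iff.mp (isPSUnit_iff.mp h).2⟩

lemma zPow_mul_ne_zPow_mul_of_lt [Nontrivial A] {n n' : ℤ} {x y : LaurentSeries A}
    (hx : IsPSUnit x) (hy : InPS y) (h : n < n') : zPow n * x ≠ zPow n' * y := by
  intro hxy
  have hn := congrArg (HahnSeries.coeff · n) hxy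
  simp only [coeff_zPow_mul, sub_self, hy (n - n') (by omega)] at hn
  exact (isPSUnit_iff.mp hx).2.ne_zero hn

lemma eq_of_zPow_mul_eq_zPow_mul [Nontrivial A] {n n' : ℤ} {x y : LaurentSeries A}
    (hx : IsPSUnit x) (hy : IsPSUnit y) (h : zPow n * x = zPow n' * y) : n = n' := by
  rcases lt_trichotomy n n' with hlt | heq | hgt
  · exact absurd h (zPow_mul_ne_zPow_mul_of_lt hx hy.1 hlt)
  · exact heq
  · exact absurd h.symm (zPow_mul_ne_zPow_mul_of_lt hy hx.1 hgt)

lemma coeff_mul_mem_of_inPS {I : Ideal A} {V y : LaurentSeries A} (hV : InPS V)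
    (hy : ∀ j < 0, y.coeff j ∈ I) {m : ℤ} (hm : m < 0) : (V * y).coeff m ∈ I := by
  rw [HahnSeries.coeff_mul]
  refine Ideal.sum_mem _ fun ij hij => ?_
  obtain ⟨hV1, -, hsum⟩ := Finset.mem_antidiagonal.mp hij
  have h1 : 0 ≤ ij.1 := not_lt.mp fun h => hV1 (hV _ h)
  exact I.mul_mem_left _ (hy _ (by omega))

lemma inPS_of_eq_mul_laurentFrob {I : Ideal A} (hI : IsNilpotent I) {q : ℕ} (hq : 2 ≤ q)
    {V w : LaurentSeries A} (hV : InPS V) (hw : w = V * laurentFrob q w)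
    (hwI : ∀ m < 0, w.coeff m ∈ I) : InPS w := by
  have hpow : ∀ k : ℕ, ∀ m < 0, w.coeff m ∈ I ^ (k + 1) := by
    intro k
    induction k with
    | zero => simpa using hwI
    | succ k ih =>
      intro m hm
      rw [hw]
      refine coeff_mul_mem_of_inPS hV (fun j hj => ?_) hm
      rw [coeff_laurentFrob (by omega)]
      have hjq : w.coeff j ^ q ∈ I ^ ((k + 1) * q) := pow_mul I (k + 1) q ▸
        Ideal.pow_mem_pow (ih j hj) q
      exact Ideal.pow_le_pow_right (by nlinarith) hjq
  obtain ⟨n, hn⟩ := hI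
  intro m hm
  have h := Ideal.pow_le_pow_right (Nat.le_succ n) (hpow n m hm)
  rwa [hn, Ideal.zero_eq_bot, Ideal.mem_bot] at h

theorem isPSUnit_of_mul_eq_mul_laurentFrob {I : Ideal A} (hI : IsNilpotent I) {q : ℕ}
    (hq : 2 ≤ q) {m m' : ℤ} {u u' w : LaurentSeries A} (hu : IsPSUnit u) (hu' : IsPSUnit u')
    (hrel : w * (zPow m * u) = zPow m' * u' * laurentFrob q w)
    (hw : IsPSUnit (lmap (Ideal.Quotient.mk I) w)) : IsPSUnit w := by
  rcases subsingleton_or_nontrivial (A ⧸ I) with hA | hA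
  · -- `0` is a unit modulo `I`, hence a unit of `A`
    have : Subsingleton A := subsingleton_of_zero_eq_one
      (isUnit_zero_iff.mp (hI.isUnit_quotient_mk_iff.mp (isUnit_of_subsingleton _)))
    exact isPSUnit_iff.mpr ⟨fun _ _ => Subsingleton.elim _ _, isUnit_of_subsingleton _⟩
  have hq0 : q ≠ 0 := by omega
  have hm : m = m' := by
    have h := congrArg (lmapRingHom (Ideal.Quotient.mk I)) hrel
    simp only [map_mul, lmapRingHom_apply, lmap_zPow, lmap_laurentFrob hq0] at h
    exact eq_of_zPow_mul_eq_zPow_mul (hw.mul (hu.lmap _))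
      ((hu'.lmap _).mul (hw.laurentFrob hq0)) (by linear_combination h)
  subst hm
  obtain ⟨-, v, hv, huv⟩ := hu
  have hwV : w = u' * v * laurentFrob q w :=
    (isUnit_zPow m).mul_left_cancel (by linear_combination v * hrel - w * zPow m * huv)
  refine IsPSUnit.of_lmap_quotient_mk hI
    (inPS_of_eq_mul_laurentFrob hI hq (hu'.1.mul hv) hwV fun j hj => ?_) hw
  rw [← Ideal.Quotient.eq_zero_iff_mem]
  exact hw.1 j hj

end

theorem quasi_isogeny_bounded_general
    {p : ℕ} (hp : p.Prime) {e : ℕ} (he : 1 ≤ e) {q : ℕ} (hq : q = p ^ e)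
    {A : Type*} [CommRing A] [CharP A p]
    (𝔞 : Ideal A) (h𝔞 : IsNilpotent 𝔞)
    {r : ℕ}
    (b b' f : Matrix (Fin r) (Fin r) (LaurentSeries A))
    (hdetb : ∃ (m : ℤ) (u : LaurentSeries A), IsPSUnit u ∧ b.det = zPow m * u)
    (hdetb' : ∃ (m' : ℤ) (u' : LaurentSeries A), IsPSUnit u' ∧ b'.det = zPow m' * u')
    (hqi : f * b = b' * matFrob q f)
    (l : ℤ) (w' : LaurentSeries (A ⧸ 𝔞)) (hw' : IsPSUnit w')
    (hdetfbar : (f.map (lmap (Ideal.Quotient.mk 𝔞))).det = zPow l * w') :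
    (∃ w : LaurentSeries A, IsPSUnit w ∧ f.det = zPow l * w) ∧
    ∃ M : ℕ, ∀ i j : Fin r, InZPow (-(M : ℤ)) (f i j) := by
  refine ⟨?_, exists_inZPow_neg_entries f⟩
  subst hq
  have hq0 : p ^ e ≠ 0 := pow_ne_zero e hp.ne_zero
  obtain ⟨m, u, hu, hbu⟩ := hdetb
  obtain ⟨m', u', hu', hb'u'⟩ := hdetb'
  obtain ⟨w, hdet⟩ : ∃ w, f.det = zPow l * w :=
    ⟨zPow (-l) * f.det, by rw [← mul_assoc, zPow_mul_zPow, add_neg_cancel, zPow_zero, one_mul]⟩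
  have hw : lmap (Ideal.Quotient.mk 𝔞) w = w' := by
    refine (isUnit_zPow l).mul_left_cancel ?_
    rw [← lmap_zPow_mul, ← hdet, lmap_det, hdetfbar]
  have hrel : w * (zPow m * u) = zPow m' * u' * laurentFrob (p ^ e) w := by
    have h := congrArg Matrix.det hqi
    rw [Matrix.det_mul, Matrix.det_mul, det_matFrob hp, hbu, hb'u', hdet,
      laurentFrob_zPow_mul hq0] at h
    exact (isUnit_zPow l).mul_left_cancel (by linear_combination h)
  have hq2 : 2 ≤ p ^ e := Nat.one_lt_pow (by omega) hp.one_lt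
  exact ⟨w, isPSUnit_of_mul_eq_mul_laurentFrob h𝔞 hq2 hu hu' hrel (hw ▸ hw'), hdet⟩

/-- **Second part of Proposition 2.11** for `G = GL_r`:  a quasi-isogeny `f` between bounded
local shtukas over a ring `A` of characteristic `p` with nilpotent ideal `𝔞` whose reduction
modulo `𝔞` is bounded by `(μ, z)` for some `μ` is itself bounded by `(μ̃, z)` for some `μ̃`;
concretely, if `det f̄ = z^l·w̄` for a unit `w̄` of `Ā⟦z⟧`, then `det f = z^l·w` for a unit `w`
of `A⟦z⟧` and all entries of `z^M·f` lie in `A⟦z⟧` for some `M ∈ ℕ`. -/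
theorem quasi_isogeny_bounded
    {p : ℕ} (hp : p.Prime) {e : ℕ} (he : 1 ≤ e) {q : ℕ} (hq : q = p ^ e)
    {A : Type*} [CommRing A] [CharP A p]
    (𝔞 : Ideal A) (h𝔞 : IsNilpotent 𝔞)
    {r : ℕ} (hr : 1 ≤ r)
    (b b' f : Matrix (Fin r) (Fin r) (LaurentSeries A))
    (hb : IsUnit b) (hb' : IsUnit b')
    (hbd : ∃ N : ℕ, ∀ i j : Fin r,
      InZPow (-(N : ℤ)) (b i j) ∧ InZPow (-(N : ℤ)) (b⁻¹ i j) ∧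
      InZPow (-(N : ℤ)) (b' i j) ∧ InZPow (-(N : ℤ)) (b'⁻¹ i j))
    (hdetb : ∃ (m : ℤ) (u : LaurentSeries A), IsPSUnit u ∧ b.det = zPow m * u)
    (hdetb' : ∃ (m' : ℤ) (u' : LaurentSeries A), IsPSUnit u' ∧ b'.det = zPow m' * u')
    (hf : IsUnit f) (hqi : f * b = b' * matFrob q f)
    (l : ℤ) (w' : LaurentSeries (A ⧸ 𝔞)) (hw' : IsPSUnit w')
    (hdetfbar : (f.map (lmap (Ideal.Quotient.mk 𝔞))).det = zPow l * w') :
    (∃ w : LaurentSeries A, IsPSUnit w ∧ f.det = zPow l * w) ∧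
    ∃ M : ℕ, ∀ i j : Fin r, InZPow (-(M : ℤ)) (f i j) :=
  quasi_isogeny_bounded_general hp he hq 𝔞 h𝔞 b b' f hdetb hdetb' hqi l w' hw' hdetfbar

end HVpaper
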